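/- arXiv:1410.1585 — 11 statements merged into one kernel-verified Lean document; each statement's English description precedes it below -/
import Mathlib

section
/- Let Q be a quadratic form on a finite-dimensional real vector space V of signature (2, dim V − 2), and let Z : V → ℂ be an ℝ-linear map such that Q(v) < 0 for every nonzero v in the kernel of Z. Fix z₀ ∈ ℂ, let ρ = {t·z₀ : t ∈ ℝ, t ≥ 0}, and let C⁺ = {v ∈ V : Z(v) ∈ ρ and Q(v) ≥ 0}. Then every w ∈ C⁺ with Q(w) = 0 spans an extremal ray of C⁺: whenever w = w₁ + w₂ with w₁, w₂ ∈ C⁺, both w₁ and w₂ are nonnegative scalar multiples of w. -/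
/-!
Let `w = w₁ + w₂` with `Z wᵢ = tᵢ z₀`, `tᵢ ≥ 0`. The vector `t₂ w₁ - t₁ w₂` lies in the kernel of
`Z`, and since `Q (w₁ + w₂) = 0` forces `polar Q w₁ w₂ = -Q w₁ - Q w₂`, its value under `Q` is
`(t₁ + t₂) (t₂ Q w₁ + t₁ Q w₂) ≥ 0`. As `Q` is negative definite on `ker Z`, this vector vanishes,
so `w₁` and `w₂` are proportional, with nonnegative coefficients `tᵢ / (t₁ + t₂)`.
-/

theorem QuadraticMap.map_smul_sub_smul_of_map_add_eq_zero {R M : Type*} [CommRing R]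
    [AddCommGroup M] [Module R M] (Q : QuadraticMap R M R) {x y : M} (hxy : Q (x + y) = 0)
    (a b : R) : Q (b • x - a • y) = (a + b) * (b * Q x + a * Q y) := by
  have hpolar : polar Q x y = -Q x - Q y := by
    rw [polar, hxy]
    ring
  rw [sub_eq_add_neg, ← neg_smul, QuadraticMap.map_add Q, QuadraticMap.map_smul,
    QuadraticMap.map_smul, polar_smul_left, polar_smul_right, hpolar, smul_eq_mul, smul_eq_mul,
    smul_eq_mul, smul_eq_mul]
  ring

theorem eq_div_add_smul_add_of_smul_eq_smul {K M : Type*} [Field K] [AddCommGroup M]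
    [Module K M] {a b : K} {x y : M} (h : b • x = a • y) (hab : a + b ≠ 0) :
    x = (a / (a + b)) • (x + y) := by
  rw [div_eq_inv_mul, mul_smul, smul_add, ← h, ← add_smul, eq_inv_smul_iff₀ hab, add_comm]

section NegDefKernel

variable {V : Type*} [AddCommGroup V] [Module ℝ V] {Q : QuadraticForm ℝ V} {Z : V →ₗ[ℝ] ℂ}

theorem eq_zero_of_map_eq_zero_of_nonneg (hker : ∀ v : V, Z v = 0 → v ≠ 0 → Q v < 0) {v : V}
    (hZ : Z v = 0) (hQ : 0 ≤ Q v) : v = 0 := by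
  by_contra hv
  exact (hker v hZ hv).not_ge hQ

theorem smul_eq_smul_of_map_add_eq_zero (hker : ∀ v : V, Z v = 0 → v ≠ 0 → Q v < 0)
    {z₀ : ℂ} {x y : V} {a b : ℝ} (ha : 0 ≤ a) (hb : 0 ≤ b) (hZx : Z x = a • z₀)
    (hZy : Z y = b • z₀) (hQx : 0 ≤ Q x) (hQy : 0 ≤ Q y) (hxy : Q (x + y) = 0) :
    b • x = a • y := by
  refine sub_eq_zero.mp (eq_zero_of_map_eq_zero_of_nonneg hker ?_ ?_)
  · rw [map_sub, map_smul, map_smul, hZx, hZy, smul_smul, smul_smul, mul_comm, sub_self]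
  · rw [Q.map_smul_sub_smul_of_map_add_eq_zero hxy]
    positivity

end NegDefKernel

theorem stmt_3_general (V : Type*) [AddCommGroup V] [Module ℝ V]
    (Q : QuadraticForm ℝ V)
    (Z : V →ₗ[ℝ] ℂ)
    (hker : ∀ v : V, Z v = 0 → v ≠ 0 → Q v < 0)
    (z₀ : ℂ) (Cplus : Set V)
    (hC : Cplus = {v : V | (∃ t : ℝ, 0 ≤ t ∧ Z v = t • z₀) ∧ 0 ≤ Q v})
    (w : V) (hQw : Q w = 0) :
    ∀ w₁ ∈ Cplus, ∀ w₂ ∈ Cplus, w = w₁ + w₂ →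
      (∃ c₁ : ℝ, 0 ≤ c₁ ∧ w₁ = c₁ • w) ∧ (∃ c₂ : ℝ, 0 ≤ c₂ ∧ w₂ = c₂ • w) := by
  subst hC
  rintro x ⟨⟨a, ha, hZx⟩, hQx⟩ y ⟨⟨b, hb, hZy⟩, hQy⟩ rfl
  have hba : b • x = a • y := smul_eq_smul_of_map_add_eq_zero hker ha hb hZx hZy hQx hQy hQw
  rcases (add_nonneg ha hb).eq_or_lt with hab | hab
  · obtain ⟨rfl, rfl⟩ : a = 0 ∧ b = 0 := ⟨by linarith, by linarith⟩
    have hx : x = 0 := eq_zero_of_map_eq_zero_of_nonneg hker (by simp [hZx]) hQx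
    have hy : y = 0 := eq_zero_of_map_eq_zero_of_nonneg hker (by simp [hZy]) hQy
    exact ⟨⟨0, le_rfl, by simp [hx]⟩, ⟨0, le_rfl, by simp [hy]⟩⟩
  refine ⟨⟨a / (a + b), by positivity, eq_div_add_smul_add_of_smul_eq_smul hba hab.ne'⟩,
    ⟨b / (a + b), by positivity, ?_⟩⟩
  rw [add_comm a, add_comm x]
  exact eq_div_add_smul_add_of_smul_eq_smul hba.symm (by linarith)

/-- Lemma 3.9 of the paper, second statement.
`Q` is a quadratic form of signature `(2, dim V − 2)` on a finite-dimensional real vector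
space `V` (i.e. in some basis it is `x₀² + x₁² − x₂² − ⋯`), `Z : V → ℂ` is ℝ-linear with
`Q < 0` on `ker Z ∖ {0}`, and `C⁺ = {v | Z v ∈ ρ ∧ Q v ≥ 0}` for a ray
`ρ = {t·z₀ : t ≥ 0}`.  Then every `w ∈ C⁺` with `Q(w) = 0` spans an extremal ray of `C⁺`:
whenever `w = w₁ + w₂` with `w₁, w₂ ∈ C⁺`, both `w₁` and `w₂` are nonnegative scalar
multiples of `w`. -/
theorem stmt_3 (n : ℕ) (V : Type*) [AddCommGroup V] [Module ℝ V] [FiniteDimensional ℝ V]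
    (hdim : Module.finrank ℝ V = n + 2)
    (Q : QuadraticForm ℝ V)
    (hsig : ∃ b : Module.Basis (Fin (n + 2)) ℝ V, ∀ v : V,
      Q v = (b.repr v 0) ^ 2 + (b.repr v 1) ^ 2 - ∑ i : Fin n, (b.repr v i.succ.succ) ^ 2)
    (Z : V →ₗ[ℝ] ℂ)
    (hker : ∀ v : V, Z v = 0 → v ≠ 0 → Q v < 0)
    (z₀ : ℂ) (Cplus : Set V)
    (hC : Cplus = {v : V | (∃ t : ℝ, 0 ≤ t ∧ Z v = t • z₀) ∧ 0 ≤ Q v})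
    (w : V) (hw : w ∈ Cplus) (hQw : Q w = 0) :
    ∀ w₁ ∈ Cplus, ∀ w₂ ∈ Cplus, w = w₁ + w₂ →
      (∃ c₁ : ℝ, 0 ≤ c₁ ∧ w₁ = c₁ • w) ∧ (∃ c₂ : ℝ, 0 ≤ c₂ ∧ w₂ = c₂ • w) :=
  stmt_3_general V Q Z hker z₀ Cplus hC w hQw
end

section
/- Let V be a finite-dimensional real vector space, Z : V → ℂ an ℝ-linear map, and Q a quadratic form on V such that Q(v) < 0 for every nonzero v ∈ ker Z. Then there exists a constant C > 0 such that the quadratic form v ↦ C²·|Z(v)|² − Q(v) is positive definite on V. -/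
/-!
On the unit sphere of any norm, `|Z|²` is continuous, nonnegative, and vanishes only where
`-Q > 0`; compactness then gives one `c > 0` with `c |Z|² - Q > 0` on the whole sphere
(the open sets `{(n + 1) |Z|² - Q > 0}` increase and cover it). Both terms are homogeneous
of degree two, so positivity spreads from the sphere to all nonzero vectors.
-/

open Set

theorem IsCompact.exists_pos_mul_add_pos {X : Type*} [TopologicalSpace X] {K : Set X}
    (hK : IsCompact K) {f g : X → ℝ} (hf : Continuous f) (hg : Continuous g)
    (hg0 : ∀ x, 0 ≤ g x) (hfg : ∀ x ∈ K, g x = 0 → 0 < f x) :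
    ∃ C : ℝ, 0 < C ∧ ∀ x ∈ K, 0 < C * g x + f x := by
  let U : ℕ → Set X := fun n => {x | 0 < (n + 1) * g x + f x}
  have hU_mono : Monotone U := by
    intro m n hmn x hx
    have : (m : ℝ) ≤ n := by exact_mod_cast hmn
    simp only [U, mem_ofPred_eq] at hx ⊢
    nlinarith [hg0 x]
  have hKU : K ⊆ ⋃ n, U n := by
    intro x hx
    rcases (hg0 x).eq_or_lt with hgx | hgx
    · exact mem_iUnion.2 ⟨0, by simpa [U, ← hgx] using hfg x hx hgx.symm⟩
    · obtain ⟨n, hn⟩ := exists_nat_gt (-f x / g x)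
      rw [div_lt_iff₀ hgx] at hn
      exact mem_iUnion.2 ⟨n, by simp only [U, mem_ofPred_eq]; nlinarith⟩
  obtain ⟨n, hn⟩ := hK.elim_directed_cover U (fun n => isOpen_lt continuous_const (by fun_prop))
    hKU hU_mono.directed_le
  exact ⟨n + 1, by positivity, hn⟩

theorem QuadraticMap.continuous_of_finiteDimensional {𝕜 E : Type*} [NontriviallyNormedField 𝕜]
    [CompleteSpace 𝕜] [Invertible (2 : 𝕜)] [NormedAddCommGroup E] [NormedSpace 𝕜 E]
    [FiniteDimensional 𝕜 E] (Q : QuadraticForm 𝕜 E) : Continuous Q := by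
  let B : E →L[𝕜] E →L[𝕜] 𝕜 := LinearMap.toContinuousLinearMap
    (LinearMap.toContinuousLinearMap.toLinearMap ∘ₗ QuadraticMap.associated Q)
  have hB : ∀ v, B v v = Q v := QuadraticMap.associated_eq_self_apply 𝕜 Q
  exact (B.continuous₂.comp (continuous_id.prodMk continuous_id)).congr hB

theorem pos_of_pos_on_unit_sphere {E : Type*} [NormedAddCommGroup E] [NormedSpace ℝ E]
    {φ : E → ℝ} (hφ : ∀ (t : ℝ) v, φ (t • v) = t ^ 2 * φ v) (h : ∀ v, ‖v‖ = 1 → 0 < φ v)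
    {v : E} (hv : v ≠ 0) : 0 < φ v :=
  calc 0 < ‖v‖ ^ 2 * φ ((‖v‖⁻¹ : ℝ) • v) :=
        mul_pos (by positivity) (h _ (norm_smul_inv_norm hv))
    _ = φ v := by rw [← hφ, smul_inv_smul₀ (norm_ne_zero_iff.2 hv)]

theorem exists_pos_mul_norm_sq_sub_pos {E F : Type*} [NormedAddCommGroup E] [NormedSpace ℝ E]
    [FiniteDimensional ℝ E] [NormedAddCommGroup F] [NormedSpace ℝ F]
    (Z : E →ₗ[ℝ] F) (Q : QuadraticForm ℝ E) (hker : ∀ v, Z v = 0 → v ≠ 0 → Q v < 0) :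
    ∃ c : ℝ, 0 < c ∧ ∀ v, v ≠ 0 → 0 < c * ‖Z v‖ ^ 2 - Q v := by
  obtain ⟨c, hc, hsphere⟩ := (isCompact_sphere (0 : E) 1).exists_pos_mul_add_pos
    Q.continuous_of_finiteDimensional.neg (by fun_prop : Continuous fun v => ‖Z v‖ ^ 2)
    (fun v => by positivity) fun v hv hZv => by
      simpa using hker v (by simpa using hZv) (ne_zero_of_mem_unit_sphere ⟨v, hv⟩)
  refine ⟨c, hc, fun v hv => pos_of_pos_on_unit_sphere (φ := fun v => c * ‖Z v‖ ^ 2 - Q v)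
    (fun t w => ?_) (fun w hw => ?_) hv⟩
  · rw [map_smul, norm_smul, QuadraticMap.map_smul, smul_eq_mul, Real.norm_eq_abs, mul_pow,
      sq_abs]
    ring
  · simpa [sub_eq_add_neg] using hsphere w (by simpa using hw)

/-- compactness argument inside Lemma A.4 of the paper.
`V` is a finite-dimensional real vector space, `Z : V → ℂ` is ℝ-linear, and `Q` is a
quadratic form with `Q < 0` on `ker Z ∖ {0}`.  Then there is `C > 0` such that the
quadratic form `v ↦ C²·|Z(v)|² − Q(v)` is positive definite. -/
theorem stmt_5 (V : Type*) [AddCommGroup V] [Module ℝ V] [FiniteDimensional ℝ V]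
    (Z : V →ₗ[ℝ] ℂ) (Q : QuadraticForm ℝ V)
    (hker : ∀ v : V, Z v = 0 → v ≠ 0 → Q v < 0) :
    ∃ C : ℝ, 0 < C ∧ ∀ v : V, v ≠ 0 → 0 < C ^ 2 * ‖Z v‖ ^ 2 - Q v := by
  let e := (Module.finBasis ℝ V).equivFun
  let _ : NormedAddCommGroup V := NormedAddCommGroup.induced V _ e e.injective
  let _ : NormedSpace ℝ V := NormedSpace.induced ℝ V _ e
  obtain ⟨c, hc, hcZQ⟩ := exists_pos_mul_norm_sq_sub_pos Z Q hker
  exact ⟨√c, Real.sqrt_pos.2 hc, by simpa only [Real.sq_sqrt hc.le] using hcZQ⟩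
end

section
/- Let α > 0 and a ∈ ℝ, and for K ∈ ℝ define the quadratic form Q_K on ℝ⁴ by Q_K(e₀,e₁,e₂,e₃) = K·(e₁² − 2e₀e₂) + 4e₂² − 6e₁e₃. Then Q_K is negative definite on the two-dimensional subspace of ℝ⁴ spanned by (1, 0, α²/2, 0) and (0, 1, 0, a) if and only if α² < K < 6a. -/
/-- the `b = 0` case of Lemma 8.2 of the paper.
For `α > 0`, `a ∈ ℝ` and `K ∈ ℝ`, the quadratic form
`Q_K(e₀,e₁,e₂,e₃) = K·(e₁² − 2e₀e₂) + 4e₂² − 6e₁e₃` on `ℝ⁴` is negative definite on the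
two-dimensional subspace spanned by `(1, 0, α²/2, 0)` and `(0, 1, 0, a)` iff
`α² < K < 6a`. -/
theorem stmt_7 (α a K : ℝ) (hα : 0 < α) :
    (∀ v ∈ Submodule.span ℝ
        ({![1, 0, α ^ 2 / 2, 0], ![0, 1, 0, a]} : Set (Fin 4 → ℝ)),
      v ≠ 0 → K * ((v 1) ^ 2 - 2 * v 0 * v 2) + 4 * (v 2) ^ 2 - 6 * v 1 * v 3 < 0) ↔
    (α ^ 2 < K ∧ K < 6 * a) := by
  have ha2 : (0:ℝ) < α ^ 2 := by positivity
  constructor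
  · intro h
    have h1 := h ![1, 0, α ^ 2 / 2, 0]
      (Submodule.subset_span (by simp)) (by
        intro hc
        have := congrFun hc 0
        simp at this)
    have h2 := h ![0, 1, 0, a]
      (Submodule.subset_span (by simp)) (by
        intro hc
        have := congrFun hc 1
        simp at this)
    simp only [Matrix.cons_val_zero, Matrix.cons_val_one, Matrix.head_cons,
      Matrix.cons_val_two, Matrix.tail_cons, Matrix.cons_val_three] at h1 h2
    constructor
    · nlinarith [h1]
    · nlinarith [h2]
  · rintro ⟨hK1, hK2⟩ v hv hv0
    obtain ⟨s, t, hst⟩ := Submodule.mem_span_pair.mp hv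
    have hne : s ≠ 0 ∨ t ≠ 0 := by
      by_contra hc
      push_neg at hc
      apply hv0
      rw [← hst, hc.1, hc.2]
      simp
    have e0 : v 0 = s := by rw [← hst]; simp
    have e1 : v 1 = t := by rw [← hst]; simp
    have e2 : v 2 = s * (α ^ 2 / 2) := by rw [← hst]; simp
    have e3 : v 3 = t * a := by rw [← hst]; simp
    rw [e0, e1, e2, e3]
    have key : K * (t ^ 2 - 2 * s * (s * (α ^ 2 / 2))) + 4 * (s * (α ^ 2 / 2)) ^ 2
        - 6 * t * (t * a) = s ^ 2 * α ^ 2 * (α ^ 2 - K) + t ^ 2 * (K - 6 * a) := by ring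
    rw [key]
    rcases hne with hs | ht
    · have h1 : s ^ 2 * α ^ 2 * (α ^ 2 - K) < 0 :=
        mul_neg_of_pos_of_neg (by positivity) (by linarith)
      have h2 : t ^ 2 * (K - 6 * a) ≤ 0 :=
        mul_nonpos_of_nonneg_of_nonpos (sq_nonneg t) (by linarith)
      linarith
    · have h1 : s ^ 2 * α ^ 2 * (α ^ 2 - K) ≤ 0 := mul_nonpos_of_nonneg_of_nonpos (by positivity) (by linarith)
      have h2 : t ^ 2 * (K - 6 * a) < 0 :=
        mul_neg_of_pos_of_neg (by positivity) (by linarith)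
      linarith
end

section
/- Let α > 0 and a, b ∈ ℝ, and for K ∈ ℝ define the quadratic form Q_K on ℝ⁴ by Q_K(e₀,e₁,e₂,e₃) = K·(e₁² − 2e₀e₂) + 4e₂² − 6e₁e₃. Then Q_K is negative definite on the two-dimensional subspace of ℝ⁴ spanned by v₁ = (1, 0, α²/2, b·α²/2) and v₂ = (0, 1, 0, a) if and only if K > α² and (K − α²)(6a − K) > (9/4)·b²·α². In particular, if a > α²/6 + |b|·α/2, then K = (α² + 6a)/2 satisfies these conditions, so Q_{(α²+6a)/2} is negative definite on span{v₁, v₂}. -/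
/-- Lemma 8.2 of the paper.
For `α > 0`, `a, b ∈ ℝ` and `K ∈ ℝ`, the quadratic form
`Q_K(e₀,e₁,e₂,e₃) = K·(e₁² − 2e₀e₂) + 4e₂² − 6e₁e₃` on `ℝ⁴` is negative definite on the
two-dimensional subspace spanned by `v₁ = (1, 0, α²/2, b·α²/2)` and `v₂ = (0, 1, 0, a)` iff
`K > α²` and `(K − α²)(6a − K) > (9/4)·b²·α²`.  In particular, if `a > α²/6 + |b|·α/2`,
then `K = (α² + 6a)/2` satisfies these conditions, so `Q_{(α²+6a)/2}` is negative definite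
on `span{v₁, v₂}`. -/
theorem stmt_8 (α a b : ℝ) (hα : 0 < α) :
    (∀ K : ℝ,
      (∀ v ∈ Submodule.span ℝ
          ({![1, 0, α ^ 2 / 2, b * α ^ 2 / 2], ![0, 1, 0, a]} : Set (Fin 4 → ℝ)),
        v ≠ 0 → K * ((v 1) ^ 2 - 2 * v 0 * v 2) + 4 * (v 2) ^ 2 - 6 * v 1 * v 3 < 0) ↔
      (α ^ 2 < K ∧ (K - α ^ 2) * (6 * a - K) > 9 / 4 * b ^ 2 * α ^ 2)) ∧
    (a > α ^ 2 / 6 + |b| * α / 2 →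
      ∀ v ∈ Submodule.span ℝ
          ({![1, 0, α ^ 2 / 2, b * α ^ 2 / 2], ![0, 1, 0, a]} : Set (Fin 4 → ℝ)),
        v ≠ 0 →
          (α ^ 2 + 6 * a) / 2 * ((v 1) ^ 2 - 2 * v 0 * v 2)
            + 4 * (v 2) ^ 2 - 6 * v 1 * v 3 < 0) := by
  have hα2 : (0:ℝ) < α ^ 2 := by positivity
  set v1 : Fin 4 → ℝ := ![1, 0, α ^ 2 / 2, b * α ^ 2 / 2] with hv1
  set v2 : Fin 4 → ℝ := ![0, 1, 0, a] with hv2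
  -- component values of s • v1 + t • v2
  have hc : ∀ s t : ℝ, (s • v1 + t • v2) 0 = s ∧ (s • v1 + t • v2) 1 = t ∧
      (s • v1 + t • v2) 2 = s * (α ^ 2 / 2) ∧
      (s • v1 + t • v2) 3 = s * (b * α ^ 2 / 2) + t * a := by
    intro s t
    refine ⟨?_, ?_, ?_, ?_⟩ <;> simp [hv1, hv2]
  have hmem : ∀ s t : ℝ, s • v1 + t • v2 ∈
      Submodule.span ℝ ({v1, v2} : Set (Fin 4 → ℝ)) := by
    intro s t
    exact Submodule.add_mem _
      (Submodule.smul_mem _ _ (Submodule.subset_span (Set.mem_insert _ _)))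
      (Submodule.smul_mem _ _ (Submodule.subset_span (Set.mem_insert_of_mem _ rfl)))
  have hne : ∀ s t : ℝ, ¬ (s = 0 ∧ t = 0) → s • v1 + t • v2 ≠ 0 := by
    intro s t hst h0
    obtain ⟨h0', h1', -, -⟩ := hc s t
    exact hst ⟨by rw [← h0', h0]; rfl, by rw [← h1', h0]; rfl⟩
  have main : ∀ K : ℝ,
      (∀ v ∈ Submodule.span ℝ ({v1, v2} : Set (Fin 4 → ℝ)),
        v ≠ 0 → K * ((v 1) ^ 2 - 2 * v 0 * v 2) + 4 * (v 2) ^ 2 - 6 * v 1 * v 3 < 0) ↔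
      (α ^ 2 < K ∧ (K - α ^ 2) * (6 * a - K) > 9 / 4 * b ^ 2 * α ^ 2) := by
    intro K
    constructor
    · intro h
      have hQ : ∀ s t : ℝ, ¬ (s = 0 ∧ t = 0) →
          (α ^ 2 - K) * α ^ 2 * s ^ 2 + (K - 6 * a) * t ^ 2 - 3 * b * α ^ 2 * s * t < 0 := by
        intro s t hst
        have := h _ (hmem s t) (hne s t hst)
        obtain ⟨h0, h1, h2, h3⟩ := hc s t
        rw [h0, h1, h2, h3] at this
        nlinarith [this]
      have hK : α ^ 2 < K := by
        have := hQ 1 0 (by simp)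
        nlinarith
      refine ⟨hK, ?_⟩
      have ht0 : (2 * ((α ^ 2 - K) * α ^ 2) ≠ 0) := by nlinarith
      have := hQ (3 * b * α ^ 2) (2 * ((α ^ 2 - K) * α ^ 2)) (by
        rintro ⟨-, h⟩; exact ht0 h)
      nlinarith [this, hα2, hK]
    · rintro ⟨hK, hD⟩ v hv hv0
      obtain ⟨s, t, rfl⟩ := Submodule.mem_span_pair.mp hv
      obtain ⟨h0, h1, h2, h3⟩ := hc s t
      rw [h0, h1, h2, h3]
      have hst : ¬ (s = 0 ∧ t = 0) := by
        rintro ⟨rfl, rfl⟩; simp at hv0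
      have hA : (α ^ 2 - K) * α ^ 2 < 0 := by nlinarith
      -- 4AC - B² > 0 where A = (α²-K)α², C = K-6a, B = -3bα²
      have hDisc : 4 * ((α ^ 2 - K) * α ^ 2) * (K - 6 * a) - (3 * b * α ^ 2) ^ 2 > 0 := by
        nlinarith [hD, hα2]
      rcases eq_or_ne t 0 with rfl | ht
      · have hs : s ≠ 0 := fun h => hst ⟨h, rfl⟩
        have : 0 < s ^ 2 := by positivity
        nlinarith
      · have : 0 < t ^ 2 := by positivity
        nlinarith [sq_nonneg (2 * ((α ^ 2 - K) * α ^ 2) * s - 3 * b * α ^ 2 * t), hA, hDisc]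
  constructor
  · exact main
  · intro ha
    apply (main ((α ^ 2 + 6 * a) / 2)).mpr
    have hb : |b| * α ≥ 0 := by positivity
    have h1 : 6 * a - α ^ 2 > 3 * (|b| * α) := by nlinarith
    have hb2 : b ^ 2 = |b| ^ 2 := (sq_abs b).symm
    constructor
    · nlinarith
    · nlinarith [h1, hb, sq_nonneg (|b| * α)]
end

section
/- Let α > 0 and a, b ∈ ℝ, and define the ℝ-linear map Z : ℝ⁴ → ℂ by Z(e₀,e₁,e₂,e₃) = (−e₃ + b·e₂ + a·e₁) + i·(e₂ − (α²/2)·e₀). Then the kernel of Z contains a nonzero point of the twisted cubic cone 𝔠 = {(x³, x²y, (1/2)xy², (1/6)y³) : x, y ∈ ℝ} if and only if a = α²/6 + (1/2)bα or a = α²/6 − (1/2)bα. -/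
/-- computation in the proof of Lemma 8.3 of the paper.
For `α > 0` and `a, b ∈ ℝ`, the ℝ-linear map `Z : ℝ⁴ → ℂ`,
`Z(e₀,e₁,e₂,e₃) = (−e₃ + b·e₂ + a·e₁) + i·(e₂ − (α²/2)·e₀)`, has a nonzero point of the
twisted cubic cone `𝔠 = {(x³, x²y, xy²/2, y³/6)}` in its kernel iff
`a = α²/6 + bα/2` or `a = α²/6 − bα/2`. -/
theorem stmt_9 (α a b : ℝ) (hα : 0 < α)
    (Z : (Fin 4 → ℝ) →ₗ[ℝ] ℂ)
    (hZ : ∀ e : Fin 4 → ℝ,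
      Z e = ((-(e 3) + b * e 2 + a * e 1 : ℝ) : ℂ)
        + ((e 2 - α ^ 2 / 2 * e 0 : ℝ) : ℂ) * Complex.I) :
    (∃ x y : ℝ, ¬(x = 0 ∧ y = 0) ∧
        Z ![x ^ 3, x ^ 2 * y, x * y ^ 2 / 2, y ^ 3 / 6] = 0) ↔
      (a = α ^ 2 / 6 + b * α / 2 ∨ a = α ^ 2 / 6 - b * α / 2) := by
  constructor
  · rintro ⟨x, y, hxy, hz⟩
    rw [hZ] at hz
    simp only [Matrix.cons_val_zero, Matrix.cons_val_one, Matrix.head_cons,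
      Matrix.cons_val_two, Matrix.tail_cons, Matrix.cons_val_three] at hz
    rw [Complex.ext_iff] at hz
    simp only [Complex.add_re, Complex.ofReal_re, Complex.mul_re, Complex.I_re,
      Complex.I_im, Complex.ofReal_im, Complex.add_im, Complex.mul_im,
      Complex.zero_re, Complex.zero_im] at hz
    obtain ⟨hre, him⟩ := hz
    have hre' : -(y ^ 3 / 6) + b * (x * y ^ 2 / 2) + a * (x ^ 2 * y) = 0 := by
      linarith
    have him' : x * y ^ 2 / 2 - α ^ 2 / 2 * x ^ 3 = 0 := by linarith
    have hx : x ≠ 0 := by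
      rintro rfl
      have hy3 : y ^ 3 = 0 := by linarith
      have hy : y = 0 := by
        have := pow_eq_zero_iff (n := 3) (by norm_num) |>.mp hy3
        exact this
      exact hxy ⟨rfl, hy⟩
    have hfac : x * (y - α * x) * (y + α * x) = 0 := by nlinarith
    rcases mul_eq_zero.mp hfac with h | h
    · rcases mul_eq_zero.mp h with h | h
      · exact absurd h hx
      · -- y = α x
        have hy : y = α * x := by linarith
        subst hy
        right
        have hx3 : x ^ 3 ≠ 0 := pow_ne_zero 3 hx
        have : x ^ 3 * (-(α ^ 3) / 6 + b * α ^ 2 / 2 + a * α) = 0 := by ring_nf; nlinarith [hre']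
        have h0 : -(α ^ 3) / 6 + b * α ^ 2 / 2 + a * α = 0 :=
          (mul_eq_zero.mp this).resolve_left hx3
        have hα' : α ≠ 0 := ne_of_gt hα
        field_simp
        nlinarith [h0]
    · -- y = -α x
      have hy : y = -(α * x) := by linarith
      subst hy
      left
      have hx3 : x ^ 3 ≠ 0 := pow_ne_zero 3 hx
      have : x ^ 3 * (α ^ 3 / 6 + b * α ^ 2 / 2 - a * α) = 0 := by ring_nf; nlinarith [hre']
      have h0 : α ^ 3 / 6 + b * α ^ 2 / 2 - a * α = 0 :=
        (mul_eq_zero.mp this).resolve_left hx3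
      have hα' : α ≠ 0 := ne_of_gt hα
      field_simp
      nlinarith [h0]
  · rintro (ha | ha)
    · refine ⟨1, -α, by simp [ne_of_gt hα], ?_⟩
      rw [hZ]
      simp only [Matrix.cons_val_zero, Matrix.cons_val_one, Matrix.head_cons,
        Matrix.cons_val_two, Matrix.tail_cons, Matrix.cons_val_three]
      have h1 : -((-α) ^ 3 / 6) + b * (1 * (-α) ^ 2 / 2) + a * (1 ^ 2 * (-α)) = (0 : ℝ) := by
        rw [ha]; ring
      have h2 : 1 * (-α) ^ 2 / 2 - α ^ 2 / 2 * 1 ^ 3 = (0 : ℝ) := by ring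
      rw [h1, h2]; simp
    · refine ⟨1, α, by simp [ne_of_gt hα], ?_⟩
      rw [hZ]
      simp only [Matrix.cons_val_zero, Matrix.cons_val_one, Matrix.head_cons,
        Matrix.cons_val_two, Matrix.tail_cons, Matrix.cons_val_three]
      have h1 : -(α ^ 3 / 6) + b * (1 * α ^ 2 / 2) + a * (1 ^ 2 * α) = (0 : ℝ) := by
        rw [ha]; ring
      have h2 : 1 * α ^ 2 / 2 - α ^ 2 / 2 * 1 ^ 3 = (0 : ℝ) := by ring
      rw [h1, h2]; simp
end

section
/- Let α > 0 and e₀, e₁, e₂, e₃ ∈ ℝ with e₁ > 0, and set ν = (e₂ − (α²/2)e₀)/e₁. Then the inequality e₃ − ν·e₂ + (ν²/2)·e₁ − (ν³/6)·e₀ ≤ (1/6)·(α² + ν²)·(e₁ − ν·e₀) holds if and only if α²·(e₁² − 2e₀e₂) + 4e₂² − 6e₁e₃ ≥ 0. -/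
/-! Substituting `e₂ = ν e₁ + (α²/2) e₀`, the Bayer–Macrì–Toda expression
`α²(e₁² − 2e₀e₂) + 4e₂² − 6e₁e₃` becomes exactly `6e₁` times the gap between the two sides
of the shifted inequality, so the two conditions agree in sign as soon as `e₁ > 0`. -/

theorem bmt_expr_eq_six_mul_gap {α e₀ e₁ e₂ e₃ ν : ℝ} (hν : ν * e₁ = e₂ - α ^ 2 / 2 * e₀) :
    α ^ 2 * (e₁ ^ 2 - 2 * e₀ * e₂) + 4 * e₂ ^ 2 - 6 * e₁ * e₃
      = 6 * e₁ * (1 / 6 * (α ^ 2 + ν ^ 2) * (e₁ - ν * e₀)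
        - (e₃ - ν * e₂ + ν ^ 2 / 2 * e₁ - ν ^ 3 / 6 * e₀)) := by
  obtain rfl : e₂ = ν * e₁ + α ^ 2 / 2 * e₀ := by linarith
  ring

theorem stmt_11_general (α e₀ e₁ e₂ e₃ ν : ℝ) (he₁ : 0 < e₁)
    (hν : ν = (e₂ - α ^ 2 / 2 * e₀) / e₁) :
    (e₃ - ν * e₂ + ν ^ 2 / 2 * e₁ - ν ^ 3 / 6 * e₀
        ≤ 1 / 6 * (α ^ 2 + ν ^ 2) * (e₁ - ν * e₀)) ↔
      0 ≤ α ^ 2 * (e₁ ^ 2 - 2 * e₀ * e₂) + 4 * e₂ ^ 2 - 6 * e₁ * e₃ := by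
  have hνe₁ : ν * e₁ = e₂ - α ^ 2 / 2 * e₀ := by
    rw [hν, div_mul_cancel₀ _ he₁.ne']
  rw [bmt_expr_eq_six_mul_gap hνe₁, mul_nonneg_iff_of_pos_left (by positivity), sub_nonneg]

/-- algebraic equivalence in the proof of Theorem 4.2 of the paper.
For `α > 0`, `e₁ > 0` and `ν = (e₂ − (α²/2)e₀)/e₁`, the inequality
`e₃ − ν·e₂ + (ν²/2)·e₁ − (ν³/6)·e₀ ≤ (1/6)·(α² + ν²)·(e₁ − ν·e₀)`
holds iff `α²·(e₁² − 2e₀e₂) + 4e₂² − 6e₁e₃ ≥ 0`. -/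
theorem stmt_11 (α e₀ e₁ e₂ e₃ ν : ℝ) (hα : 0 < α) (he₁ : 0 < e₁)
    (hν : ν = (e₂ - α ^ 2 / 2 * e₀) / e₁) :
    (e₃ - ν * e₂ + ν ^ 2 / 2 * e₁ - ν ^ 3 / 6 * e₀
        ≤ 1 / 6 * (α ^ 2 + ν ^ 2) * (e₁ - ν * e₀)) ↔
      0 ≤ α ^ 2 * (e₁ ^ 2 - 2 * e₀ * e₂) + 4 * e₂ ^ 2 - 6 * e₁ * e₃ :=
  stmt_11_general α e₀ e₁ e₂ e₃ ν he₁ hν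
end

section
/- Let α, α' > 0, β, β' ∈ ℝ, and f = (f₀, f₁, f₂) ∈ ℝ³ with f₁ − β·f₀ ≠ 0. Set ν = (f₂ − β·f₁ + ((β² − α²)/2)·f₀)/(f₁ − β·f₀). Then the three vectors f, (1, β, (α² + β²)/2), and (1, β', (α'² + β'²)/2) in ℝ³ are linearly dependent if and only if α'² + (β' − β − ν)² = α² + ν². -/
/-- computation in the proof of Lemma 4.3 of the paper,
Bertram's nested wall theorem.  For `α, α' > 0`, `β, β' ∈ ℝ`, `f ∈ ℝ³` with
`f₁ − β·f₀ ≠ 0` and `ν = (f₂ − β·f₁ + ((β² − α²)/2)·f₀)/(f₁ − β·f₀)`, the three vectors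
`f`, `(1, β, (α² + β²)/2)`, `(1, β', (α'² + β'²)/2)` are linearly dependent iff
`α'² + (β' − β − ν)² = α² + ν²`. -/
theorem stmt_12 (α α' β β' : ℝ) (hα : 0 < α) (hα' : 0 < α')
    (f : Fin 3 → ℝ) (hf : f 1 - β * f 0 ≠ 0) (ν : ℝ)
    (hν : ν = (f 2 - β * f 1 + (β ^ 2 - α ^ 2) / 2 * f 0) / (f 1 - β * f 0)) :
    (¬ LinearIndependent ℝ
        ![f, ![1, β, (α ^ 2 + β ^ 2) / 2], ![1, β', (α' ^ 2 + β' ^ 2) / 2]]) ↔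
      α' ^ 2 + (β' - β - ν) ^ 2 = α ^ 2 + ν ^ 2 := by
  have h1 : LinearIndependent ℝ
        ![f, ![1, β, (α ^ 2 + β ^ 2) / 2], ![1, β', (α' ^ 2 + β' ^ 2) / 2]] ↔
      IsUnit (Matrix.of ![f, ![1, β, (α ^ 2 + β ^ 2) / 2], ![1, β', (α' ^ 2 + β' ^ 2) / 2]]) :=
    Matrix.linearIndependent_rows_iff_isUnit
  rw [h1, Matrix.isUnit_iff_isUnit_det, isUnit_iff_ne_zero, not_ne_iff,
    Matrix.det_fin_three]
  simp only [Matrix.of_apply, Matrix.cons_val', Matrix.cons_val_zero, Matrix.cons_val_one,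
    Matrix.head_cons, Matrix.empty_val', Matrix.cons_val_fin_one, Matrix.head_fin_const,
    Matrix.cons_val_two, Matrix.tail_cons]
  subst hν
  constructor
  · intro h
    field_simp
    linear_combination (-8 * (f 1 - β * f 0)) * h
  · intro h
    field_simp at h
    have h2 : (f 0 * (β * ((α' ^ 2 + β' ^ 2) / 2) - β' * ((α ^ 2 + β ^ 2) / 2))
        - f 1 * ((α' ^ 2 + β' ^ 2) / 2 - (α ^ 2 + β ^ 2) / 2) + f 2 * (β' - β))
        * (-8 * (f 1 - β * f 0)) = 0 := by linear_combination h
    rcases mul_eq_zero.1 h2 with h3 | h3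
    · linarith [h3]
    · exact absurd h3 (by simp [hf])
end

section
/- For all real α > 0 and a > α²/6 there exists ε > 0 with the following property: for all e₀, e₁, e₂, e₃ ∈ ℝ such that e₁ > 0, e₁² − 2e₀e₂ ≥ 0, α²·(e₁² − 2e₀e₂) + 4e₂² − 6e₁e₃ ≥ 0, and |e₂ − (α²/2)e₀| < ε·e₁, one has −e₃ + a·e₁ > 0. -/
/-- numerical content of Lemma 8.9 of the paper.
For all `α > 0` and `a > α²/6` there is `ε > 0` such that: whenever `e₁ > 0`,
`e₁² − 2e₀e₂ ≥ 0`, `α²(e₁² − 2e₀e₂) + 4e₂² − 6e₁e₃ ≥ 0` and `|e₂ − (α²/2)e₀| < ε·e₁`,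
one has `−e₃ + a·e₁ > 0`. -/
theorem stmt_13 (α a : ℝ) (hα : 0 < α) (ha : α ^ 2 / 6 < a) :
    ∃ ε : ℝ, 0 < ε ∧ ∀ e₀ e₁ e₂ e₃ : ℝ, 0 < e₁ →
      0 ≤ e₁ ^ 2 - 2 * e₀ * e₂ →
      0 ≤ α ^ 2 * (e₁ ^ 2 - 2 * e₀ * e₂) + 4 * e₂ ^ 2 - 6 * e₁ * e₃ →
      |e₂ - α ^ 2 / 2 * e₀| < ε * e₁ →
      0 < -e₃ + a * e₁ := by
  have hc0 : 0 < 6 * a - α ^ 2 := by nlinarith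
  set c := 6 * a - α ^ 2 with hc
  refine ⟨min α (c / (8 * α)), lt_min hα (by positivity), ?_⟩
  intro e₀ e₁ e₂ e₃ h1 h2 h3 h4
  set ε := min α (c / (8 * α)) with hε
  have hε0 : 0 < ε := lt_min hα (by positivity)
  have hεα : ε ≤ α := min_le_left _ _
  have hεc : ε * (8 * α) ≤ c := by
    have := min_le_right α (c / (8 * α))
    calc ε * (8 * α) ≤ (c / (8 * α)) * (8 * α) := by
          apply mul_le_mul_of_nonneg_right this (by positivity)
      _ = c := by field_simp
  have hδ := abs_lt.mp h4
  have hδ2 : |e₂| * |e₂ - α ^ 2 / 2 * e₀| ≤ |e₂| * (ε * e₁) :=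
    mul_le_mul_of_nonneg_left h4.le (abs_nonneg _)
  have habs2 : e₂ * (e₂ - α ^ 2 / 2 * e₀) ≤ |e₂| * (ε * e₁) :=
    le_trans (le_trans (le_abs_self _) (abs_mul _ _).le) hδ2
  -- bound |e₂| ≤ (ε + α) * e₁
  have he2 : |e₂| ≤ (ε + α) * e₁ := by
    by_contra h
    push_neg at h
    have h5 : 4 * e₂ ^ 2 ≤ α ^ 2 * e₁ ^ 2 + 4 * (e₂ * (e₂ - α ^ 2 / 2 * e₀)) := by
      nlinarith [h2]
    have hsq : |e₂| ^ 2 = e₂ ^ 2 := sq_abs e₂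
    nlinarith [habs2, mul_pos hε0 h1, mul_pos hα h1, abs_nonneg e₂,
      mul_lt_mul_of_pos_left h (mul_pos hα h1)]
  -- main estimate
  have h7 : e₂ * (e₂ - α ^ 2 / 2 * e₀) < ((ε + α) * e₁) * (ε * e₁) := by
    have hpos : 0 < (ε + α) * e₁ := by positivity
    calc e₂ * (e₂ - α ^ 2 / 2 * e₀) ≤ |e₂| * |e₂ - α ^ 2 / 2 * e₀| :=
          le_trans (le_abs_self _) (abs_mul _ _).le
      _ ≤ ((ε + α) * e₁) * |e₂ - α ^ 2 / 2 * e₀| :=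
          mul_le_mul_of_nonneg_right he2 (abs_nonneg _)
      _ < ((ε + α) * e₁) * (ε * e₁) := by
          exact mul_lt_mul_of_pos_left h4 hpos
  have h6 : 6 * e₁ * e₃ ≤ α ^ 2 * e₁ ^ 2 + 4 * (e₂ * (e₂ - α ^ 2 / 2 * e₀)) := by
    nlinarith [h3]
  have hkey : 6 * e₁ * e₃ < 6 * a * e₁ ^ 2 := by
    nlinarith [h6, h7, mul_le_mul_of_nonneg_right hεc (sq_nonneg e₁),
      mul_nonneg (mul_nonneg (sub_nonneg.2 hεα) hε0.le) (sq_nonneg e₁)]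
  nlinarith [hkey, h1]
end

section
/- Let α > 0, ε > 0, and let x, c, d be real numbers with c > 0, c² − 2xd ≥ 0, and |d − (α²/2)x| < ε·c. Then |d| ≤ ((ε + √(α² + ε²))/2)·c. -/
/-- intermediate estimate in the proof of Lemma 8.9 of the paper.
For `α > 0`, `ε > 0` and reals `x, c, d` with `c > 0`, `c² − 2xd ≥ 0` and
`|d − (α²/2)x| < ε·c`, one has `|d| ≤ ((ε + √(α² + ε²))/2)·c`. -/
theorem stmt_14 (α ε x c d : ℝ) (hα : 0 < α) (hε : 0 < ε) (hc : 0 < c)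
    (hdisc : 0 ≤ c ^ 2 - 2 * x * d) (hnu : |d - α ^ 2 / 2 * x| < ε * c) :
    |d| ≤ (ε + Real.sqrt (α ^ 2 + ε ^ 2)) / 2 * c := by
  have hs2 : Real.sqrt (α ^ 2 + ε ^ 2) ^ 2 = α ^ 2 + ε ^ 2 :=
    Real.sq_sqrt (by positivity)
  have hs0 : 0 ≤ Real.sqrt (α ^ 2 + ε ^ 2) := Real.sqrt_nonneg _
  set s := Real.sqrt (α ^ 2 + ε ^ 2)
  rw [abs_lt] at hnu
  obtain ⟨h1, h2⟩ := hnu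
  -- (d + α²/2 x)² ≤ (d - α²/2 x)² + α² (2xd) ≤ ε²c² + α²c² = s²c²
  have key : (d + α ^ 2 / 2 * x) ^ 2 ≤ s ^ 2 * c ^ 2 := by
    nlinarith [sq_nonneg (d - α ^ 2 / 2 * x), sq_nonneg α, mul_pos hε hc]
  have hsc : 0 ≤ s * c := by positivity
  have habs : |d + α ^ 2 / 2 * x| ≤ s * c := by
    rw [abs_le]
    constructor <;> nlinarith [sq_nonneg (d + α ^ 2 / 2 * x - s * c),
      sq_nonneg (d + α ^ 2 / 2 * x + s * c)]
  rw [abs_le] at habs ⊢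
  constructor <;> nlinarith [habs.1, habs.2]
end

section
/- On ℝ³ define the quadratic form q̄(r, c, d) = c² − 2rd. Let v = (r, c, d) ∈ ℝ³ with q̄(v) > 0; define β̄ = d/c if r = 0, and β̄ = (c − √(c² − 2rd))/r if r ≠ 0, and set w = (1, β̄, β̄²/2). Then q̄(w) = 0, the polar bilinear form of q̄ vanishes on the pair (v, w), and q̄ is positive semidefinite on the linear span of v and w, i.e. q̄(s·v + t·w) ≥ 0 for all s, t ∈ ℝ. -/
/-!
The point `w = (1, β̄, β̄²/2)` lies on the cone `q̄ = 0` for every `β̄`, and the polar form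
`q̄(v, w) = 2cβ̄ - rβ̄² - 2d` vanishes exactly when `β̄` is a root of `r x² - 2c x + 2d`, which
the prescribed `β̄` is (a root of the linear equation `2d = 2cx` when `r = 0`).
Then `q̄(s v + t w) = s² q̄(v) ≥ 0`.
-/

open QuadraticMap

theorem QuadraticMap.nonneg_smul_add_smul_of_polar_eq_zero {R M : Type*} [CommRing R]
    [LinearOrder R] [IsStrictOrderedRing R] [AddCommGroup M] [Module R M]
    (Q : QuadraticForm R M) {v w : M} (hv : 0 ≤ Q v) (hw : Q w = 0)
    (hvw : polar Q v w = 0) (s t : R) : 0 ≤ Q (s • v + t • w) := by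
  rw [QuadraticMap.map_add (⇑Q), QuadraticMap.map_smul, QuadraticMap.map_smul, polar_smul_left,
    polar_smul_right, hw, hvw]
  simpa using mul_nonneg (mul_self_nonneg s) hv

/-- The discriminant `Δ̄_H(r, c, d) = c² - 2rd` in the coordinates `(r, c, d) = (v 0, v 1, v 2)`. -/
noncomputable def discriminantForm : QuadraticForm ℝ (Fin 3 → ℝ) :=
  proj 1 1 - 2 • proj 0 2

theorem discriminantForm_apply (v : Fin 3 → ℝ) :
    discriminantForm v = v 1 ^ 2 - 2 * v 0 * v 2 := by
  simp only [discriminantForm, sub_apply, smul_apply, proj_apply, nsmul_eq_mul]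
  ring

theorem discriminantForm_moment (β : ℝ) : discriminantForm ![1, β, β ^ 2 / 2] = 0 := by
  simp only [discriminantForm_apply, Matrix.cons_val_zero, Matrix.cons_val_one, Matrix.cons_val]
  ring

theorem polar_discriminantForm_moment (r c d β : ℝ) :
    polar discriminantForm ![r, c, d] ![1, β, β ^ 2 / 2] = -(r * β ^ 2 - 2 * c * β + 2 * d) := by
  simp only [polar, Matrix.cons_add_cons, Matrix.empty_add_empty, discriminantForm_apply,
    Matrix.cons_val_zero, Matrix.cons_val_one, Matrix.cons_val]
  ring

theorem quadratic_root_sub_sqrt {r c d : ℝ} (hr : r ≠ 0) (hΔ : 0 ≤ c ^ 2 - 2 * r * d) :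
    let β := (c - √(c ^ 2 - 2 * r * d)) / r
    r * β ^ 2 - 2 * c * β + 2 * d = 0 := by
  have hsq := Real.sq_sqrt hΔ
  set s := √(c ^ 2 - 2 * r * d)
  field_simp
  linear_combination hsq

theorem quadratic_root_of_discriminant_pos {r c d : ℝ} (hΔ : 0 < c ^ 2 - 2 * r * d) :
    let β := if r = 0 then d / c else (c - √(c ^ 2 - 2 * r * d)) / r
    r * β ^ 2 - 2 * c * β + 2 * d = 0 := by
  split_ifs with hr
  · subst hr
    have hc : c ≠ 0 := fun hc => by simp [hc] at hΔ
    field_simp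
    ring
  · exact quadratic_root_sub_sqrt hr hΔ.le

/-- Lemma 5.2 of the paper.
On `ℝ³` with `q̄(r,c,d) = c² − 2rd`, let `v = (r,c,d)` with `q̄(v) > 0`, let
`β̄ = d/c` if `r = 0` and `β̄ = (c − √(c² − 2rd))/r` otherwise, and set
`w = (1, β̄, β̄²/2)`.  Then `q̄(w) = 0`, the polar bilinear form of `q̄` vanishes on
`(v, w)`, and `q̄` is positive semidefinite on the span of `v` and `w`. -/
theorem stmt_15 (r c d : ℝ) (q : (Fin 3 → ℝ) → ℝ)
    (hq : ∀ v : Fin 3 → ℝ, q v = (v 1) ^ 2 - 2 * v 0 * v 2)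
    (hv : 0 < q ![r, c, d]) (betabar : ℝ)
    (hβ : betabar = if r = 0 then d / c else (c - Real.sqrt (c ^ 2 - 2 * r * d)) / r) :
    q ![1, betabar, betabar ^ 2 / 2] = 0 ∧
    q (![r, c, d] + ![1, betabar, betabar ^ 2 / 2]) - q ![r, c, d]
        - q ![1, betabar, betabar ^ 2 / 2] = 0 ∧
    ∀ s t : ℝ, 0 ≤ q (s • ![r, c, d] + t • ![1, betabar, betabar ^ 2 / 2]) := by
  obtain rfl : q = discriminantForm :=
    funext fun v => (hq v).trans (discriminantForm_apply v).symm
  have hΔ : 0 < c ^ 2 - 2 * r * d := by simpa [discriminantForm_apply] using hv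
  have hroot : r * betabar ^ 2 - 2 * c * betabar + 2 * d = 0 :=
    hβ ▸ quadratic_root_of_discriminant_pos hΔ
  have hpolar : polar discriminantForm ![r, c, d] ![1, betabar, betabar ^ 2 / 2] = 0 := by
    rw [polar_discriminantForm_moment, hroot, neg_zero]
  exact ⟨discriminantForm_moment betabar, hpolar,
    nonneg_smul_add_smul_of_polar_eq_zero _ hv.le (discriminantForm_moment betabar) hpolar⟩
end

section
/- Let α > 0, h > 0, and t ∈ ℝ with −α·h < t < 0. Let r, c, d be real numbers with c < 0, d ≥ (α²/2)·h·r, and c² − 2·h·r·d ≥ 0. Then c − t·r < 0. -/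
/-!
For `r ≤ 0` both `c` and `-t·r` are nonpositive, and `c < 0`. For `r > 0` the two hypotheses
on `d` combine to `(α·h·r)² ≤ 2·h·r·d ≤ c²`; since `c < 0` this gives `c ≤ -α·h·r < t·r`.
-/

lemma le_neg_of_sq_le_sq_of_nonpos {a c : ℝ} (hac : a ^ 2 ≤ c ^ 2) (hc : c ≤ 0) : c ≤ -a := by
  have : a ≤ -c :=
    calc a ≤ |a| := le_abs_self a
      _ ≤ |c| := sq_le_sq.mp hac
      _ = -c := abs_of_nonpos hc
  linarith

lemma sq_mul_le_sq_of_discrim_nonneg {α h r c d : ℝ} (hh : 0 ≤ h) (hr : 0 ≤ r)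
    (hd : α ^ 2 / 2 * h * r ≤ d) (hdisc : 0 ≤ c ^ 2 - 2 * h * r * d) :
    (α * h * r) ^ 2 ≤ c ^ 2 :=
  calc (α * h * r) ^ 2 = 2 * h * r * (α ^ 2 / 2 * h * r) := by ring
    _ ≤ 2 * h * r * d := by gcongr
    _ ≤ c ^ 2 := by linarith

theorem stmt_17_general (α h t r c d : ℝ) (hh : 0 < h)
    (ht1 : -α * h < t) (ht2 : t < 0) (hc : c < 0)
    (hd : α ^ 2 / 2 * h * r ≤ d) (hdisc : 0 ≤ c ^ 2 - 2 * h * r * d) :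
    c - t * r < 0 := by
  rcases le_or_gt r 0 with hr | hr
  · linarith [mul_nonneg_of_nonpos_of_nonpos ht2.le hr]
  · have hc_le : c ≤ -(α * h * r) :=
      le_neg_of_sq_le_sq_of_nonpos
        (sq_mul_le_sq_of_discrim_nonneg hh.le hr.le hd hdisc) hc.le
    have htr : -α * h * r < t * r := mul_lt_mul_of_pos_right ht1 hr
    linarith

/-- numerical content of Lemma B.3 of the paper: central charges of
semistable objects only "move to the left".  Let `α > 0`, `h > 0`, `−α·h < t < 0`, and
let `r, c, d` be reals with `c < 0`, `d ≥ (α²/2)·h·r` and `c² − 2·h·r·d ≥ 0`.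
Then `c − t·r < 0`. -/
theorem stmt_17 (α h t r c d : ℝ) (hα : 0 < α) (hh : 0 < h)
    (ht1 : -α * h < t) (ht2 : t < 0) (hc : c < 0)
    (hd : α ^ 2 / 2 * h * r ≤ d) (hdisc : 0 ≤ c ^ 2 - 2 * h * r * d) :
    c - t * r < 0 :=
  stmt_17_general α h t r c d hh ht1 ht2 hc hd hdisc
end
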